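/- Let a > 0 and t₀ ∈ ℝ, and define η(t) := arctan(a·sech(t + t₀)) for t ∈ ℝ. Then for all t ∈ ℝ: sin(η(t)) > 0, sin²(η(t)) − η'(t)² > 0, and sin(η(t))·η''(t) − 2·cos(η(t))·η'(t)² + cos(η(t))·sin²(η(t)) = 0. Consequently, in the setup below, the curve α(t) = cos(η(t))·p + sin(η(t))·γ(t) satisfies the rectifying condition ⟨p, (1/w(t))·T'(t) − α(t)⟩ = 0 for all t, i.e., α is a timelike rectifying curve with respect to p. -/

import Mathlib

open Real

/-- The Minkowski scalar product on `ℝ⁴₁`: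
`⟨x,y⟩ = -x₁y₁ + x₂y₂ + x₃y₃ + x₄y₄`. -/
noncomputable def mdot (x y : Fin 4 → ℝ) : ℝ :=
  -(x 0 * y 0) + x 1 * y 1 + x 2 * y 2 + x 3 * y 3

/-!
Only the `p`-component of the curve matters. Since `⟨p, ·⟩` is linear it commutes with `d/dt`,
and `⟨p, α⟩ = cos η`; so with `c = cos ∘ η` one gets `⟨p, T⟩ = c' / w`, and the rectifying
condition reads `(c' / w)' / w = c`.
Clearing denominators with `w² = sin² η - η'²`, this is `sin² η` times the ODE
`sin η η'' - 2 cos η η'² + cos η sin² η = 0`, which in turn says that `u = cot ∘ η` solves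
`u'' = u`. For `η = arctan (a sech (t + t₀))` one has `u = cosh (t + t₀) / a`.
-/

noncomputable def rectifyingDefect (η : ℝ → ℝ) (t : ℝ) : ℝ :=
  sin (η t) * deriv (deriv η) t - 2 * cos (η t) * deriv η t ^ 2 + cos (η t) * sin (η t) ^ 2

section Minkowski

variable (p : Fin 4 → ℝ)

theorem mdot_comm (x y : Fin 4 → ℝ) : mdot x y = mdot y x := by
  unfold mdot; ring

theorem mdot_add_right (x y : Fin 4 → ℝ) : mdot p (x + y) = mdot p x + mdot p y := by
  simp only [mdot, Pi.add_apply]; ring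

theorem mdot_sub_right (x y : Fin 4 → ℝ) : mdot p (x - y) = mdot p x - mdot p y := by
  simp only [mdot, Pi.sub_apply]; ring

theorem mdot_smul_right (c : ℝ) (x : Fin 4 → ℝ) : mdot p (c • x) = c * mdot p x := by
  simp only [mdot, Pi.smul_apply, smul_eq_mul]; ring

theorem HasDerivAt.const_mdot {F : ℝ → Fin 4 → ℝ} {F' : Fin 4 → ℝ} {t : ℝ}
    (h : HasDerivAt F F' t) : HasDerivAt (fun s => mdot p (F s)) (mdot p F') t := by
  have hF (i : Fin 4) := hasDerivAt_pi.mp h i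
  exact ((((hF 0).const_mul (p 0)).neg.add ((hF 1).const_mul (p 1))).add
    ((hF 2).const_mul (p 2))).add ((hF 3).const_mul (p 3))

theorem deriv_const_mdot {F : ℝ → Fin 4 → ℝ} {t : ℝ} (h : DifferentiableAt ℝ F t) :
    deriv (fun s => mdot p (F s)) t = mdot p (deriv F t) :=
  (h.hasDerivAt.const_mdot p).deriv

end Minkowski

section Cotangent

theorem cot_arctan {x : ℝ} (hx : x ≠ 0) : cot (arctan x) = x⁻¹ := by
  rw [cot_eq_cos_div_sin, cos_arctan, sin_arctan]
  field_simp

variable {η : ℝ → ℝ}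

theorem HasDerivAt.cot {η' t : ℝ} (hη : HasDerivAt η η' t) (hsin : Real.sin (η t) ≠ 0) :
    HasDerivAt (fun s => Real.cot (η s)) (-η' / Real.sin (η t) ^ 2) t := by
  simp only [cot_eq_cos_div_sin]
  refine (hη.cos.div hη.sin hsin).congr_deriv ?_
  field_simp
  linear_combination (-η') * Real.sin_sq_add_cos_sq (η t)

theorem deriv_cot_comp (hη : Differentiable ℝ η) (hsin : ∀ s, sin (η s) ≠ 0) :
    deriv (fun s => cot (η s)) = fun s => -deriv η s / sin (η s) ^ 2 :=
  funext fun s => ((hη s).hasDerivAt.cot (hsin s)).deriv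

theorem rectifyingDefect_eq_sin_pow_three_mul (hη : ContDiff ℝ 2 η)
    (hsin : ∀ s, sin (η s) ≠ 0) (t : ℝ) :
    rectifyingDefect η t = sin (η t) ^ 3 * (cot (η t) - deriv (deriv fun s => cot (η s)) t) := by
  have hη₁ : HasDerivAt η (deriv η t) t := (hη.differentiable (by norm_num) t).hasDerivAt
  have hη₂ : HasDerivAt (deriv η) (deriv (deriv η) t) t :=
    (hη.differentiable_deriv_two t).hasDerivAt
  have hcot' : HasDerivAt (fun s => -deriv η s / sin (η s) ^ 2)
      ((-deriv (deriv η) t * sin (η t) ^ 2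
          + deriv η t * (2 * sin (η t) * (cos (η t) * deriv η t))) / (sin (η t) ^ 2) ^ 2) t :=
    (hη₂.neg.div (hη₁.sin.pow 2) (pow_ne_zero 2 (hsin t))).congr_deriv (by simp)
  rw [rectifyingDefect, deriv_cot_comp (hη.differentiable (by norm_num)) hsin, hcot'.deriv,
    cot_eq_cos_div_sin]
  have := hsin t
  field_simp
  ring

theorem deriv_sq_lt_sin_sq_iff (hη : Differentiable ℝ η) (hsin : ∀ s, sin (η s) ≠ 0) (t : ℝ) :
    deriv η t ^ 2 < sin (η t) ^ 2 ↔ deriv (fun s => cot (η s)) t ^ 2 < 1 + cot (η t) ^ 2 := by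
  have hsin_t := hsin t
  have hs : 0 < sin (η t) ^ 2 := by positivity
  have hlhs : (-deriv η t / sin (η t) ^ 2) ^ 2
      = deriv η t ^ 2 / sin (η t) ^ 2 / sin (η t) ^ 2 := by
    ring
  have hrhs : 1 + cot (η t) ^ 2 = 1 / sin (η t) ^ 2 := by
    rw [cot_eq_cos_div_sin]
    field_simp
    linear_combination sin_sq_add_cos_sq (η t)
  rw [deriv_cot_comp hη hsin, hlhs, hrhs, div_lt_div_iff_of_pos_right hs, div_lt_one hs]

end Cotangent

section Rectifying

variable {p : Fin 4 → ℝ} {γ α T : ℝ → Fin 4 → ℝ} {η w : ℝ → ℝ}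

theorem inv_mul_deriv_inv_mul_deriv_cos (hη : ContDiff ℝ 2 η)
    (hw : ∀ s, w s = √(sin (η s) ^ 2 - deriv η s ^ 2)) {t : ℝ}
    (hspeed : deriv η t ^ 2 < sin (η t) ^ 2) (hode : rectifyingDefect η t = 0) :
    (w t)⁻¹ * deriv (fun s => (w s)⁻¹ * deriv (fun s => cos (η s)) s) t = cos (η t) := by
  rw [rectifyingDefect] at hode
  have hη₁ (s : ℝ) : HasDerivAt η (deriv η s) s :=
    (hη.differentiable (by norm_num) s).hasDerivAt
  have hη₂ : HasDerivAt (deriv η) (deriv (deriv η) t) t :=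
    (hη.differentiable_deriv_two t).hasDerivAt
  have hdcos : deriv (fun s => cos (η s)) = fun s => -sin (η s) * deriv η s :=
    funext fun s => (hη₁ s).cos.deriv
  have hpos : 0 < sin (η t) ^ 2 - deriv η t ^ 2 := sub_pos.mpr hspeed
  have hw₀ : w t ≠ 0 := by rw [hw]; positivity
  have hw₂ : w t ^ 2 = sin (η t) ^ 2 - deriv η t ^ 2 := by rw [hw]; exact sq_sqrt hpos.le
  have hwD : HasDerivAt w ((2 * sin (η t) * (cos (η t) * deriv η t)
      - 2 * deriv η t * deriv (deriv η) t) / (2 * w t)) t := by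
    rw [funext hw]
    exact (((hη₁ t).sin.pow 2).sub (hη₂.pow 2)).sqrt hpos.ne' |>.congr_deriv (by simp)
  have hD : HasDerivAt (fun s => (w s)⁻¹ * (-sin (η s) * deriv η s)) _ t :=
    (hwD.inv hw₀).mul ((hη₁ t).sin.neg.mul hη₂)
  rw [hdcos, hD.deriv]
  simp only [Pi.inv_apply, Pi.neg_apply]
  field_simp
  linear_combination (-cos (η t) * deriv η t ^ 2 - sin (η t) * deriv (deriv η) t
    - cos (η t) * (w t ^ 2 + sin (η t) ^ 2 - deriv η t ^ 2)) * hw₂ - sin (η t) ^ 2 * hode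

theorem mdot_rectifying_of_rectifyingDefect_eq_zero (hp : mdot p p = 1) (hγ : ContDiff ℝ 2 γ)
    (hγp : ∀ t, mdot (γ t) p = 0) (hη : ContDiff ℝ 2 η)
    (hspeed : ∀ t, deriv η t ^ 2 < sin (η t) ^ 2)
    (hw : ∀ t, w t = √(sin (η t) ^ 2 - deriv η t ^ 2))
    (hα : ∀ t, α t = cos (η t) • p + sin (η t) • γ t) (hT : ∀ t, T t = (w t)⁻¹ • deriv α t)
    {t : ℝ} (hode : rectifyingDefect η t = 0) :
    mdot p ((w t)⁻¹ • deriv T t - α t) = 0 := by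
  have hpα : (fun s => mdot p (α s)) = fun s => cos (η s) := by
    funext s
    rw [hα, mdot_add_right, mdot_smul_right, mdot_smul_right, hp, mdot_comm, hγp]
    ring
  have hα₂ : ContDiff ℝ 2 α := by
    rw [funext hα]
    exact (hη.cos.smul contDiff_const).add (hη.sin.smul hγ)
  have hw₁ : ContDiff ℝ 1 w := by
    rw [funext hw]
    exact (((hη.of_le one_le_two).sin.pow 2).sub ((hη.deriv' (n := 1)).pow 2)).sqrt
      fun s => (sub_pos.mpr (hspeed s)).ne'
  have hT₁ : ContDiff ℝ 1 T := by
    rw [funext hT]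
    refine (hw₁.inv fun s => ?_).smul (hα₂.deriv' (n := 1))
    rw [hw]
    exact (sqrt_pos.mpr (sub_pos.mpr (hspeed s))).ne'
  have hpT : (fun s => mdot p (T s)) = fun s => (w s)⁻¹ * deriv (fun s => cos (η s)) s := by
    funext s
    rw [hT, mdot_smul_right, ← deriv_const_mdot p (hα₂.differentiable (by norm_num) s), hpα]
  rw [mdot_sub_right, mdot_smul_right, ← deriv_const_mdot p (hT₁.differentiable one_ne_zero t),
    hpT, congrFun hpα t, inv_mul_deriv_inv_mul_deriv_cos hη hw (hspeed t) hode, sub_self]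

end Rectifying

theorem arctan_sech_gives_rectifying_general
    (p : Fin 4 → ℝ) (hp : mdot p p = 1)
    (γ : ℝ → Fin 4 → ℝ) (hγsm : ContDiff ℝ (⊤ : ℕ∞) γ)
    (hγp : ∀ t, mdot (γ t) p = 0)
    (a t₀ : ℝ) (ha : 0 < a)
    (η : ℝ → ℝ) (hη : ∀ t, η t = Real.arctan (a * (Real.cosh (t + t₀))⁻¹))
    (w : ℝ → ℝ)
    (hw : ∀ t, w t = Real.sqrt (Real.sin (η t) ^ 2 - (deriv η t) ^ 2))
    (α : ℝ → Fin 4 → ℝ)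
    (hα : ∀ t, α t = Real.cos (η t) • p + Real.sin (η t) • γ t)
    (T : ℝ → Fin 4 → ℝ) (hT : ∀ t, T t = (w t)⁻¹ • deriv α t) :
    (∀ t, 0 < Real.sin (η t)) ∧
    (∀ t, (deriv η t) ^ 2 < Real.sin (η t) ^ 2) ∧
    (∀ t, Real.sin (η t) * deriv (deriv η) t
        - 2 * Real.cos (η t) * (deriv η t) ^ 2
        + Real.cos (η t) * Real.sin (η t) ^ 2 = 0) ∧
    (∀ t, mdot p ((w t)⁻¹ • deriv T t - α t) = 0) := by
  have hsin (t : ℝ) : 0 < sin (η t) := by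
    rw [hη, sin_arctan]; have := cosh_pos (t + t₀); positivity
  have hη₂ : ContDiff ℝ 2 η := by
    rw [funext hη]
    exact (contDiff_const.mul ((by fun_prop : ContDiff ℝ 2 fun t => cosh (t + t₀)).inv
      fun t => (cosh_pos _).ne')).arctan
  have hcot (t : ℝ) : cot (η t) = cosh (t + t₀) / a := by
    rw [hη, cot_arctan (by have := cosh_pos (t + t₀); positivity)]
    field_simp
  have hdcosh : deriv (fun t => cosh (t + t₀) / a) = fun t => sinh (t + t₀) / a := by ext; simp
  have hdsinh : deriv (fun t => sinh (t + t₀) / a) = fun t => cosh (t + t₀) / a := by ext; simp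
  have hspeed (t : ℝ) : deriv η t ^ 2 < sin (η t) ^ 2 := by
    rw [deriv_sq_lt_sin_sq_iff (hη₂.differentiable (by norm_num)) (fun s => (hsin s).ne'),
      funext hcot, hdcosh, hcot t, div_pow, div_pow, ← sub_pos]
    field_simp
    nlinarith [cosh_sq (t + t₀)]
  have hode (t : ℝ) : rectifyingDefect η t = 0 := by
    rw [rectifyingDefect_eq_sin_pow_three_mul hη₂ (fun s => (hsin s).ne'), funext hcot, hdcosh,
      hdsinh, hcot t, sub_self, mul_zero]
  exact ⟨hsin, hspeed, hode, fun t => mdot_rectifying_of_rectifyingDefect_eq_zero hp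
    (hγsm.of_le (by norm_cast)) hγp hη₂ hspeed hw hα hT (hode t)⟩

/-- For `η(t) = arctan (a sech (t + t₀))` with `a > 0`, `η` satisfies the positivity
and timelikeness conditions and the rectifying ODE; consequently the curve
`α(t) = cos(η t) • p + sin(η t) • γ(t)` is a timelike rectifying curve w.r.t. `p`. -/
theorem arctan_sech_gives_rectifying
    (p : Fin 4 → ℝ) (hp : mdot p p = 1)
    (γ : ℝ → Fin 4 → ℝ) (hγsm : ContDiff ℝ (⊤ : ℕ∞) γ)
    (hγ1 : ∀ t, mdot (γ t) (γ t) = 1)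
    (hγp : ∀ t, mdot (γ t) p = 0)
    (hγ' : ∀ t, mdot (deriv γ t) (deriv γ t) = -1)
    (a t₀ : ℝ) (ha : 0 < a)
    (η : ℝ → ℝ) (hη : ∀ t, η t = Real.arctan (a * (Real.cosh (t + t₀))⁻¹))
    (w : ℝ → ℝ)
    (hw : ∀ t, w t = Real.sqrt (Real.sin (η t) ^ 2 - (deriv η t) ^ 2))
    (α : ℝ → Fin 4 → ℝ)
    (hα : ∀ t, α t = Real.cos (η t) • p + Real.sin (η t) • γ t)
    (T : ℝ → Fin 4 → ℝ) (hT : ∀ t, T t = (w t)⁻¹ • deriv α t) :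
    (∀ t, 0 < Real.sin (η t)) ∧
    (∀ t, (deriv η t) ^ 2 < Real.sin (η t) ^ 2) ∧
    (∀ t, Real.sin (η t) * deriv (deriv η) t
        - 2 * Real.cos (η t) * (deriv η t) ^ 2
        + Real.cos (η t) * Real.sin (η t) ^ 2 = 0) ∧
    (∀ t, mdot p ((w t)⁻¹ • deriv T t - α t) = 0) :=
  arctan_sech_gives_rectifying_general p hp γ hγsm hγp a t₀ ha η hη w hw α hα T hT
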